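/- arXiv:2111.00664 — 2 statements merged into one kernel-verified Lean document; each statement's English description precedes it below -/
import Mathlib

section
/- There exist absolute constants c, C > 0 such that the following holds. Let δ ∈ (0,1/2) and let k, p, r be positive integers with k < log(1/δ), p ≥ log(1/δ), and r ≤ c·log(1/δ). Let u₁, …, u_k be i.i.d. standard Gaussian vectors in ℝ^r and v₁, …, v_k be i.i.d. standard Gaussian vectors in ℝ^p, with all 2k vectors mutually independent. Then with probability at least 1 − δ, Σ_{i=1}^{k} ‖uᵢ‖₂²·‖vᵢ‖₂² ≤ C·k·log(1/δ)·p. -/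
/-!
Off an event of probability at most `δ`, every `‖uᵢ‖₂²` is below `16 log(1/δ)` and every
`‖vᵢ‖₂²` below `16 p`, so the sum of the `k` products is at most `256 k log(1/δ) p`.
The tails come from the Chernoff bound `E exp(‖g‖₂²/4) = 2^{n/2} ≤ e^{n/2}` for a standard
Gaussian `g ∈ ℝⁿ`, i.e. `P(‖g‖₂² ≥ a) ≤ e^{n/2 - a/4}`; since `r ≤ log(1/δ) ≤ p`, each tail is
at most `e^{-(7/2) log(1/δ)}`, small enough to absorb the union bound over `k < log(1/δ)` indices.
-/

open MeasureTheory ProbabilityTheory Matrix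
open scoped NNReal ENNReal

instance matrixMeasurableSpace (n m : ℕ) : MeasurableSpace (Matrix (Fin n) (Fin m) ℝ) :=
  MeasurableSpace.pi

/-- The law of an `n × m` random matrix with i.i.d. standard Gaussian `N(0,1)` entries. -/
noncomputable def gaussianMatrix (n m : ℕ) : Measure (Matrix (Fin n) (Fin m) ℝ) :=
  Measure.pi fun _ : Fin n => Measure.pi fun _ : Fin m => gaussianReal 0 1

/-- The law of an `n × m` random matrix with i.i.d. `N(0,v)` entries. -/
noncomputable def gaussianMatrixVar (n m : ℕ) (v : ℝ≥0) : Measure (Matrix (Fin n) (Fin m) ℝ) :=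
  Measure.pi fun _ : Fin n => Measure.pi fun _ : Fin m => gaussianReal 0 v

/-- The law of a random vector in `ℝⁿ` with i.i.d. standard Gaussian `N(0,1)` entries. -/
noncomputable def gaussianVec (n : ℕ) : Measure (Fin n → ℝ) :=
  Measure.pi fun _ : Fin n => gaussianReal 0 1

/-- Frobenius norm of a real matrix. -/
noncomputable def frob {n m : ℕ} (M : Matrix (Fin n) (Fin m) ℝ) : ℝ :=
  Real.sqrt (∑ i, ∑ j, (M i j) ^ 2)

/-- Euclidean norm of a vector in `ℝⁿ`. -/
noncomputable def euclNorm {n : ℕ} (v : Fin n → ℝ) : ℝ :=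
  Real.sqrt (∑ i, (v i) ^ 2)

/-- `P` is a Moore–Penrose pseudoinverse of `M`. -/
def IsMoorePenrose {a b : ℕ} (M : Matrix (Fin a) (Fin b) ℝ)
    (P : Matrix (Fin b) (Fin a) ℝ) : Prop :=
  M * P * M = M ∧ P * M * P = P ∧ (M * P)ᵀ = M * P ∧ (P * M)ᵀ = P * M

/-- Best rank-`k` approximation error of `A` in Frobenius norm. -/
noncomputable def rankErr {n : ℕ} (A : Matrix (Fin n) (Fin n) ℝ) (k : ℕ) : ℝ :=
  sInf {e : ℝ | ∃ B : Matrix (Fin n) (Fin n) ℝ, B.rank ≤ k ∧ e = frob (A - B)}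

open Real

lemma lintegral_exp_mul_sq_gaussianReal {t : ℝ} (ht : t < 1 / 2) :
    ∫⁻ x, ENNReal.ofReal (exp (t * x ^ 2)) ∂gaussianReal 0 1 =
      ENNReal.ofReal (1 / √(1 - 2 * t)) := by
  have hb : 0 < 1 / 2 - t := by linarith
  have hdensity : ∀ x : ℝ, gaussianPDF 0 1 x * ENNReal.ofReal (exp (t * x ^ 2)) =
      ENNReal.ofReal ((√(2 * π))⁻¹ * exp (-(1 / 2 - t) * x ^ 2)) := by
    intro x
    rw [gaussianPDF, gaussianPDFReal, ← ENNReal.ofReal_mul (by positivity), mul_assoc,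
      ← exp_add]
    simp only [NNReal.coe_one, mul_one, sub_zero]
    congr 3
    ring
  rw [gaussianReal_of_var_ne_zero _ one_ne_zero,
    lintegral_withDensity_eq_lintegral_mul _ (measurable_gaussianPDF 0 1) (by fun_prop)]
  simp_rw [Pi.mul_apply, hdensity]
  rw [← ofReal_integral_eq_lintegral_ofReal
      ((integrable_exp_neg_mul_sq hb).const_mul _) (.of_forall fun _ => by positivity),
    integral_const_mul, integral_gaussian,
    show π / (1 / 2 - t) = 2 * π / (1 - 2 * t) by field_simp,
    sqrt_div' _ (by linarith : 0 ≤ 1 - 2 * t)]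
  have : 0 < √(2 * π) := by positivity
  field_simp

instance (n : ℕ) : IsProbabilityMeasure (gaussianVec n) := by
  unfold gaussianVec
  infer_instance

instance (n m : ℕ) : IsProbabilityMeasure (gaussianMatrix n m) :=
  Measure.pi.instIsProbabilityMeasure (μ := fun _ : Fin n => gaussianVec m)

lemma lintegral_exp_mul_sum_sq_gaussianVec {t : ℝ} (ht : t < 1 / 2) (n : ℕ) :
    ∫⁻ v, ENNReal.ofReal (exp (t * ∑ j, v j ^ 2)) ∂gaussianVec n =
      ENNReal.ofReal (1 / √(1 - 2 * t)) ^ n := by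
  have hprod : ∀ v : Fin n → ℝ, ENNReal.ofReal (exp (t * ∑ j, v j ^ 2)) =
      ∏ j, ENNReal.ofReal (exp (t * v j ^ 2)) := fun v => by
    rw [Finset.mul_sum, exp_sum, ENNReal.ofReal_prod_of_nonneg fun _ _ => (exp_pos _).le]
  have hmeas : Measurable fun x : ℝ => ENNReal.ofReal (exp (t * x ^ 2)) := by fun_prop
  simp_rw [hprod]
  rw [gaussianVec, lintegral_prod_eq_prod_lintegral_of_indepFun _ _
      (iIndepFun_pi fun _ => hmeas.aemeasurable) fun i => hmeas.comp (measurable_pi_apply i)]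
  simp_rw [(measurePreserving_eval (fun _ : Fin n => gaussianReal 0 1) _).lintegral_comp hmeas,
    lintegral_exp_mul_sq_gaussianReal ht,
    Finset.prod_const, Finset.card_univ, Fintype.card_fin]

lemma gaussianVec_sum_sq_ge_le {t : ℝ} (ht0 : 0 ≤ t) (ht : t < 1 / 2) (n : ℕ) (a : ℝ) :
    gaussianVec n {v | a ≤ ∑ j, v j ^ 2} ≤
      ENNReal.ofReal (exp (-(t * a)) * (1 / √(1 - 2 * t)) ^ n) := by
  have hsub : {v : Fin n → ℝ | a ≤ ∑ j, v j ^ 2} ⊆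
      {v | ENNReal.ofReal (exp (t * a)) ≤ ENNReal.ofReal (exp (t * ∑ j, v j ^ 2))} :=
    fun v hv => ENNReal.ofReal_le_ofReal (exp_le_exp.2 (mul_le_mul_of_nonneg_left hv ht0))
  refine (measure_mono hsub).trans ?_
  refine (meas_ge_le_lintegral_div (Measurable.ennreal_ofReal (by fun_prop)).aemeasurable
    (by simp [exp_pos]) ENNReal.ofReal_ne_top).trans_eq ?_
  rw [lintegral_exp_mul_sum_sq_gaussianVec ht, ← ENNReal.ofReal_pow (by positivity),
    ← ENNReal.ofReal_div_of_pos (exp_pos _), div_eq_mul_inv, ← Real.exp_neg, mul_comm]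

lemma gaussianVec_sum_sq_ge_le_exp (n : ℕ) (a : ℝ) :
    gaussianVec n {v | a ≤ ∑ j, v j ^ 2} ≤ ENNReal.ofReal (exp (n / 2 - a / 4)) := by
  have hbase : 1 / √(1 - 2 * (1 / 4 : ℝ)) ≤ exp (1 / 2) := by
    rw [show 1 / √(1 - 2 * (1 / 4 : ℝ)) = √2 by rw [one_div, ← sqrt_inv]; norm_num,
      sqrt_le_iff, ← exp_nat_mul]
    refine ⟨(exp_pos _).le, ?_⟩
    norm_num
    linarith [add_one_le_exp 1]
  refine (gaussianVec_sum_sq_ge_le (t := 1 / 4) (by norm_num) (by norm_num) n a).trans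
    (ENNReal.ofReal_le_ofReal ?_)
  calc exp (-(1 / 4 * a)) * (1 / √(1 - 2 * (1 / 4 : ℝ))) ^ n
      ≤ exp (-(1 / 4 * a)) * exp (1 / 2) ^ n := by gcongr
    _ = exp (n / 2 - a / 4) := by rw [← exp_nat_mul, ← exp_add]; ring_nf

lemma pi_setOf_exists_mem_le {ι α : Type*} [Fintype ι] [MeasurableSpace α] (μ : Measure α)
    [IsProbabilityMeasure μ] {S : Set α} (hS : MeasurableSet S) :
    Measure.pi (fun _ : ι => μ) {x | ∃ i, x i ∈ S} ≤ Fintype.card ι * μ S := by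
  have hunion : {x : ι → α | ∃ i, x i ∈ S} = ⋃ i, Function.eval i ⁻¹' S := by
    ext
    simp
  rw [hunion]
  refine (measure_iUnion_fintype_le _ _).trans_eq ?_
  simp_rw [(measurePreserving_eval (fun _ : ι => μ) _).measure_preimage hS.nullMeasurableSet,
    Finset.sum_const, Finset.card_univ, nsmul_eq_mul]

lemma gaussianMatrix_exists_row_sum_sq_ge_le (k n : ℕ) (a : ℝ) :
    gaussianMatrix k n {M | ∃ i, a ≤ ∑ j, M i j ^ 2} ≤
      ENNReal.ofReal (k * exp (n / 2 - a / 4)) := by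
  have hS : MeasurableSet {v : Fin n → ℝ | a ≤ ∑ j, v j ^ 2} :=
    measurableSet_le measurable_const (by fun_prop)
  refine (pi_setOf_exists_mem_le (ι := Fin k) (gaussianVec n) hS).trans ?_
  rw [Fintype.card_fin, ENNReal.ofReal_mul (Nat.cast_nonneg k), ENNReal.ofReal_natCast]
  gcongr
  exact gaussianVec_sum_sq_ge_le_exp n a

lemma mul_exp_le_half_of_log_le {δ k n t : ℝ} (hδ : 0 < δ) (hδ2 : δ < 1 / 2)
    (hk : k ≤ log (1 / δ)) (hn : n ≤ t) (ht : log (1 / δ) ≤ t) :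
    k * exp (n / 2 - 16 * t / 4) ≤ δ / 2 := by
  set L := log (1 / δ)
  have hL : 0 < L := log_pos (by rw [one_div]; exact one_lt_inv_iff₀.2 ⟨hδ, by linarith⟩)
  have hδL : exp (-L) = δ := by simp only [L, one_div, log_inv, neg_neg, exp_log hδ]
  calc k * exp (n / 2 - 16 * t / 4) ≤ exp L * exp (n / 2 - 16 * t / 4) := by
        gcongr
        linarith [add_one_le_exp L]
    _ ≤ exp (-L) * exp (-L) := by
        rw [← exp_add, ← exp_add]
        exact exp_le_exp.2 (by linarith)
    _ ≤ δ / 2 := by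
        rw [hδL]
        nlinarith

lemma compl_setOf_sum_mul_le_subset {k r p : ℕ} (a b : ℝ) :
    {x : Matrix (Fin k) (Fin r) ℝ × Matrix (Fin k) (Fin p) ℝ |
        ∑ i, (∑ j, x.1 i j ^ 2) * (∑ j, x.2 i j ^ 2) ≤ k * a * b}ᶜ ⊆
      Prod.fst ⁻¹' {M | ∃ i, a ≤ ∑ j, M i j ^ 2} ∪
        Prod.snd ⁻¹' {M | ∃ i, b ≤ ∑ j, M i j ^ 2} := by
  intro x hx
  by_contra! hrows
  simp only [Set.mem_union, Set.mem_preimage, Set.mem_ofPred_eq, not_or, not_exists,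
    not_le] at hrows
  obtain ⟨ha, hb⟩ := hrows
  refine hx ((Finset.sum_le_card_nsmul _ _ (a * b) fun i _ => ?_).trans_eq ?_)
  · exact mul_le_mul_of_nonneg (ha i).le (hb i).le (by positivity)
      (le_trans (by positivity) (hb i).le)
  · rw [Finset.card_univ, Fintype.card_fin, nsmul_eq_mul, mul_assoc]

lemma ofReal_one_sub_le_of_measure_compl_le {Ω : Type*} [MeasurableSpace Ω] {μ : Measure Ω}
    [IsProbabilityMeasure μ] {s : Set Ω} {δ : ℝ} (hδ : 0 ≤ δ)
    (h : μ sᶜ ≤ ENNReal.ofReal δ) :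
    ENNReal.ofReal (1 - δ) ≤ μ s := by
  rw [ENNReal.ofReal_sub _ hδ, ENNReal.ofReal_one, tsub_le_iff_right]
  calc 1 = μ Set.univ := measure_univ.symm
    _ ≤ μ s + μ sᶜ := measure_univ_le_add_compl s
    _ ≤ μ s + ENNReal.ofReal δ := by gcongr

/-- Products of chi-squared variables, small-`k` case: for `k < log(1/δ)`,
`p ≥ log(1/δ)` and `r ≤ c·log(1/δ)`, i.i.d. standard Gaussian vectors `uᵢ ∈ ℝʳ`, `vᵢ ∈ ℝᵖ`
(`i = 1, …, k`) satisfy `Σᵢ ‖uᵢ‖₂²·‖vᵢ‖₂² ≤ C·k·log(1/δ)·p` with probability `1 - δ`. -/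
theorem chi_squared_products_small_k :
    ∃ c C : ℝ, 0 < c ∧ 0 < C ∧
      ∀ (δ : ℝ), 0 < δ → δ < 1 / 2 →
      ∀ (k p r : ℕ), 0 < k → 0 < p → 0 < r →
        (k : ℝ) < Real.log (1 / δ) → Real.log (1 / δ) ≤ (p : ℝ) →
        (r : ℝ) ≤ c * Real.log (1 / δ) →
        ENNReal.ofReal (1 - δ) ≤
          ((gaussianMatrix k r).prod (gaussianMatrix k p))
            {x : Matrix (Fin k) (Fin r) ℝ × Matrix (Fin k) (Fin p) ℝ |
              ∑ i, (∑ j, (x.1 i j) ^ 2) * (∑ j, (x.2 i j) ^ 2) ≤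
                C * (k : ℝ) * Real.log (1 / δ) * (p : ℝ)} := by
  refine ⟨1, 256, one_pos, by norm_num, fun δ hδ hδ2 k p r _ _ _ hkL hLp hrL => ?_⟩
  set L := log (1 / δ)
  rw [one_mul] at hrL
  rw [show (256 : ℝ) * k * L * p = k * (16 * L) * (16 * p) by ring]
  refine ofReal_one_sub_le_of_measure_compl_le hδ.le ?_
  calc _ ≤ _ := measure_mono (compl_setOf_sum_mul_le_subset _ _)
    _ ≤ gaussianMatrix k r {M | ∃ i, 16 * L ≤ ∑ j, M i j ^ 2} +
          gaussianMatrix k p {M | ∃ i, 16 * (p : ℝ) ≤ ∑ j, M i j ^ 2} := by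
        refine (measure_union_le _ _).trans_eq ?_
        rw [← Set.prod_univ, ← Set.univ_prod, Measure.prod_prod, Measure.prod_prod,
          measure_univ, measure_univ, mul_one, one_mul]
    _ ≤ ENNReal.ofReal (δ / 2) + ENNReal.ofReal (δ / 2) := by
        gcongr
        · exact (gaussianMatrix_exists_row_sum_sq_ge_le k r _).trans
            (ENNReal.ofReal_le_ofReal (mul_exp_le_half_of_log_le hδ hδ2 hkL.le hrL le_rfl))
        · exact (gaussianMatrix_exists_row_sum_sq_ge_le k p _).trans
            (ENNReal.ofReal_le_ofReal (mul_exp_le_half_of_log_le hδ hδ2 hkL.le le_rfl hLp))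
    _ = ENNReal.ofReal δ := by
        rw [← ENNReal.ofReal_add (by positivity) (by positivity), add_halves]
end

section
/- For every constant C ≥ 1 there exist constants c > 0 and δ₀ > 0 such that the following holds. Let δ ∈ (0, δ₀), n = ⌈log(1/δ)⌉, and let q be a positive integer with q ≤ c·log(1/δ)/log(log(1/δ)) and q ≤ n/2. Let g ∈ ℝⁿ be a standard Gaussian vector. Then the probability of the event { (Σ_{i=1}^{q} gᵢ²) / ‖g‖₂² ≤ 1/(50·C²·n³) } is at least 10δ. -/
/-! On the box where the first `q` coordinates lie in `[-A, A]` with `A = 1 / (10 C n²)` and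
coordinate `q` lies in `[1, 2]`, the first `q` coordinates carry at most
`q A² ≤ 1 / (50 C² n³)` of the squared norm. The standard Gaussian density is at least `1/20`
on `[-2, 2]`, so the box has probability at least `(A / 10)^q / 20 = (100 C n²)^(-q) / 20`.
With `L = log (1/δ) ≤ n < L + 1` and `q log L ≤ L / 12` this is at least
`L^(-3q) / 20 ≥ e^(-L/4) / 20 ≥ 10 e^(-L) = 10 δ` once `L ≥ 200 C + 20`. -/

open MeasureTheory ProbabilityTheory Matrix
open scoped NNReal ENNReal

open Real Finset

lemma one_div_twenty_le_gaussianPDFReal {t : ℝ} (ht : |t| ≤ 2) :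
    1 / 20 ≤ gaussianPDFReal 0 1 t := by
  have hsqrt : √(2 * π) ≤ 2.51 := by
    rw [show (2.51 : ℝ) = √(2.51 ^ 2) by rw [sqrt_sq (by norm_num)]]
    exact sqrt_le_sqrt (by nlinarith [pi_lt_d2])
  have hexp : exp (-2) ≤ exp (-t ^ 2 / 2) :=
    exp_le_exp.2 (by nlinarith [sq_abs t, abs_nonneg t])
  have hexp2 : 0.1353 ≤ exp (-2) := by
    rw [show (-2 : ℝ) = -1 + -1 by norm_num, exp_add]
    nlinarith [exp_neg_one_gt_d9]
  rw [gaussianPDFReal_def]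
  simp only [NNReal.coe_one, mul_one, sub_zero]
  rw [← div_eq_inv_mul, le_div_iff₀ (by positivity)]
  nlinarith [sqrt_nonneg (2 * π)]

lemma gaussianReal_Icc_ge {x y : ℝ} (hx : -2 ≤ x) (hxy : x ≤ y) (hy : y ≤ 2) :
    ENNReal.ofReal ((y - x) / 20) ≤ gaussianReal 0 1 (Set.Icc x y) := by
  rw [gaussianReal_apply_eq_integral 0 one_ne_zero]
  refine ENNReal.ofReal_le_ofReal ?_
  have hpdf : ∀ t ∈ Set.Icc x y, 1 / 20 ≤ gaussianPDFReal 0 1 t := fun t ht =>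
    one_div_twenty_le_gaussianPDFReal (abs_le.2 ⟨by linarith [ht.1], by linarith [ht.2]⟩)
  have h := setIntegral_ge_of_const_le measurableSet_Icc
    (by rw [volume_Icc]; exact ENNReal.ofReal_ne_top) hpdf
    (integrable_gaussianPDFReal 0 1).integrableOn
  rwa [measureReal_def, volume_Icc, ENNReal.toReal_ofReal (sub_nonneg.2 hxy), smul_eq_mul,
    mul_one_div] at h

lemma prod_ite_val_lt_ite_val_eq {M : Type*} [CommMonoid M] {n q : ℕ} (hq : q < n) (a b : M) :
    ∏ i : Fin n, (if (i : ℕ) < q then a else if (i : ℕ) = q then b else 1) = a ^ q * b := by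
  rw [Fin.prod_univ_eq_prod_range (fun k => if k < q then a else if k = q then b else 1),
    ← prod_range_mul_prod_Ico _ hq, prod_range_succ, if_neg (lt_irrefl q), if_pos rfl,
    prod_congr rfl fun k hk => if_pos (mem_range.1 hk), prod_const, card_range,
    prod_eq_one fun k hk => ?_, mul_one]
  have hk := (mem_Ico.1 hk).1
  rw [if_neg (by omega), if_neg (by omega)]

noncomputable def leadingSqRatio {n : ℕ} (q : ℕ) (g : Fin n → ℝ) : ℝ :=
  (∑ i ∈ univ.filter (fun i : Fin n => (i : ℕ) < q), g i ^ 2) / ∑ i, g i ^ 2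

lemma leadingSqRatio_le {n q : ℕ} {a : ℝ} {g : Fin n → ℝ} (j : Fin n) (hj : 1 ≤ g j)
    (hg : ∀ i : Fin n, (i : ℕ) < q → |g i| ≤ a) :
    leadingSqRatio q g ≤ q * a ^ 2 := by
  have hden : 1 ≤ ∑ i, g i ^ 2 :=
    (one_le_pow₀ hj).trans (single_le_sum (fun i _ => sq_nonneg (g i)) (mem_univ j))
  have hnum : ∑ i ∈ univ.filter (fun i : Fin n => (i : ℕ) < q), g i ^ 2 ≤ q * a ^ 2 := by
    calc ∑ i ∈ univ.filter (fun i : Fin n => (i : ℕ) < q), g i ^ 2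
        ≤ ∑ _i ∈ univ.filter (fun i : Fin n => (i : ℕ) < q), a ^ 2 :=
          sum_le_sum fun i hi => sq_le_sq.2 ((hg i (mem_filter.1 hi).2).trans (le_abs_self a))
      _ ≤ q * a ^ 2 := by
          rw [sum_const, Fin.card_filter_val_lt, nsmul_eq_mul]
          gcongr
          exact_mod_cast min_le_right n q
  exact (div_le_self (sum_nonneg fun i _ => sq_nonneg _) hden).trans hnum

lemma ofReal_le_gaussianVec_leadingSqRatio_le {n q : ℕ} (hq : q < n) {a : ℝ} (ha0 : 0 ≤ a)
    (ha2 : a ≤ 2) :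
    ENNReal.ofReal ((a / 10) ^ q / 20) ≤ gaussianVec n {g | leadingSqRatio q g ≤ q * a ^ 2} := by
  let S : Fin n → Set ℝ := fun i =>
    if (i : ℕ) < q then Set.Icc (-a) a else if (i : ℕ) = q then Set.Icc 1 2 else Set.univ
  have hbox : Set.univ.pi S ⊆ {g | leadingSqRatio q g ≤ q * a ^ 2} := by
    intro g hg
    rw [Set.mem_univ_pi] at hg
    refine leadingSqRatio_le ⟨q, hq⟩ ?_ fun i hi => ?_
    · have hgq := hg ⟨q, hq⟩
      simp only [S, lt_irrefl, if_false, if_true] at hgq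
      exact hgq.1
    · simpa [S, hi, abs_le] using hg i
  have hbox_measure : gaussianVec n (Set.univ.pi S) =
      gaussianReal 0 1 (Set.Icc (-a) a) ^ q * gaussianReal 0 1 (Set.Icc 1 2) := by
    rw [gaussianVec, Measure.pi_pi, ← prod_ite_val_lt_ite_val_eq hq]
    refine prod_congr rfl fun i _ => ?_
    simp only [S]
    split_ifs <;> simp
  have hwidth : a / 10 = (a - -a) / 20 := by ring
  calc ENNReal.ofReal ((a / 10) ^ q / 20)
      = ENNReal.ofReal ((a - -a) / 20) ^ q * ENNReal.ofReal ((2 - 1) / 20) := by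
        rw [hwidth, ← ENNReal.ofReal_pow (by linarith),
          ← ENNReal.ofReal_mul (pow_nonneg (by linarith) q)]
        congr 1
        ring
    _ ≤ gaussianReal 0 1 (Set.Icc (-a) a) ^ q * gaussianReal 0 1 (Set.Icc 1 2) := by
        gcongr <;> apply gaussianReal_Icc_ge <;> linarith
    _ = gaussianVec n (Set.univ.pi S) := hbox_measure.symm
    _ ≤ _ := measure_mono hbox

lemma pow_le_exp_of_nat_mul_log_le {x y : ℝ} {k : ℕ} (hx : 0 < x) (h : k * log x ≤ y) :
    x ^ k ≤ exp y := by
  calc x ^ k = exp (log x) ^ k := by rw [exp_log hx]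
    _ = exp (k * log x) := (exp_nat_mul _ _).symm
    _ ≤ exp y := exp_le_exp.2 h

lemma two_hundred_mul_exp_neg_le {C L : ℝ} {n q : ℕ} (hC : 1 ≤ C) (hL : 200 * C + 20 ≤ L)
    (hLn : L ≤ n) (hn : (n : ℝ) < L + 1) (hq : q * log L ≤ L / 12) :
    200 * exp (-L) ≤ (1 / (100 * C * n ^ 2)) ^ q := by
  have hn0 : (0 : ℝ) < n := by linarith
  have hpoly : 100 * C * n ^ 2 ≤ L ^ 3 := by
    have hsq : (n : ℝ) ^ 2 ≤ 2 * L ^ 2 := by nlinarith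
    nlinarith [mul_le_mul_of_nonneg_right (show 200 * C ≤ L by linarith) (sq_nonneg L)]
  have hpow : L ^ (3 * q) ≤ exp (L / 4) :=
    pow_le_exp_of_nat_mul_log_le (by linarith) (by push_cast; linarith)
  have h200 : 200 ≤ exp (3 * L / 4) := by
    rw [show 3 * L / 4 = (3 : ℕ) * (L / 4) by push_cast; ring, exp_nat_mul]
    calc (200 : ℝ) ≤ (L / 4 + 1) ^ 3 := by nlinarith
      _ ≤ exp (L / 4) ^ 3 := by gcongr; exacts [by linarith, add_one_le_exp _]
  calc 200 * exp (-L) ≤ exp (3 * L / 4) * exp (-L) := by gcongr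
    _ = (exp (L / 4))⁻¹ := by rw [← exp_add, ← Real.exp_neg]; ring_nf
    _ ≤ ((100 * C * n ^ 2) ^ q)⁻¹ := by
        gcongr
        calc (100 * C * n ^ 2) ^ q ≤ (L ^ 3) ^ q := by gcongr
          _ = L ^ (3 * q) := (pow_mul L 3 q).symm
          _ ≤ exp (L / 4) := hpow
    _ = (1 / (100 * C * n ^ 2)) ^ q := by rw [one_div, inv_pow]

lemma ten_mul_le_pow_div_twenty {C δ : ℝ} {n q : ℕ} (hC : 1 ≤ C) (hδ : 0 < δ)
    (hδ₀ : δ < exp (-(200 * C + 20))) (hn : n = ⌈log (1 / δ)⌉₊)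
    (hq : (q : ℝ) ≤ 1 / 12 * log (1 / δ) / log (log (1 / δ))) :
    10 * δ ≤ (1 / (100 * C * n ^ 2)) ^ q / 20 := by
  set L := log (1 / δ) with hL
  have hδL : δ = exp (-L) := by rw [hL, one_div, log_inv, neg_neg, exp_log hδ]
  have hLbig : 200 * C + 20 < L := by
    rw [hδL, exp_lt_exp] at hδ₀
    linarith
  have hqlog : q * log L ≤ L / 12 := by
    rw [le_div_iff₀ (log_pos (by linarith))] at hq
    linarith
  have key := two_hundred_mul_exp_neg_le hC hLbig.le (hn ▸ Nat.le_ceil L)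
    (hn ▸ Nat.ceil_lt_add_one (by linarith)) hqlog
  rw [hδL]
  linarith

/-- For a standard Gaussian vector `g ∈ ℝⁿ` with `n = ⌈log(1/δ)⌉`, and
`q ≤ c·log(1/δ)/log log(1/δ)` with `q ≤ n/2`, the first `q` coordinates carry an unusually
tiny fraction of the squared norm, `(Σ_{i<q} gᵢ²)/‖g‖₂² ≤ 1/(50·C²·n³)`, with probability
at least `10δ`. -/
theorem small_leading_coordinates_probability :
    ∀ C : ℝ, 1 ≤ C → ∃ c δ₀ : ℝ, 0 < c ∧ 0 < δ₀ ∧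
      ∀ δ : ℝ, 0 < δ → δ < δ₀ →
      ∀ n : ℕ, n = ⌈Real.log (1 / δ)⌉₊ →
      ∀ q : ℕ, 0 < q →
        (q : ℝ) ≤ c * Real.log (1 / δ) / Real.log (Real.log (1 / δ)) →
        (q : ℝ) ≤ (n : ℝ) / 2 →
        ENNReal.ofReal (10 * δ) ≤
          (gaussianVec n)
            {g : Fin n → ℝ |
              (∑ i ∈ Finset.univ.filter (fun i : Fin n => (i : ℕ) < q), (g i) ^ 2) /
                  (∑ i, (g i) ^ 2) ≤
                1 / (50 * C ^ 2 * (n : ℝ) ^ 3)} := by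
  intro C hC
  refine ⟨1 / 12, exp (-(200 * C + 20)), by norm_num, exp_pos _, ?_⟩
  intro δ hδ hδ₀ n hn q hq hqc hqn
  have hqn' : q < n := by
    have hq' : (0 : ℝ) < q := Nat.cast_pos.2 hq
    exact_mod_cast (show (q : ℝ) < n by linarith)
  have hn1 : (1 : ℝ) ≤ n := by exact_mod_cast Nat.one_le_of_lt hqn'
  set A := 1 / (10 * C * n ^ 2) with hA
  have hA2 : A ≤ 2 := by
    rw [hA, div_le_iff₀ (by positivity)]
    nlinarith
  have hratio : q * A ^ 2 ≤ 1 / (50 * C ^ 2 * n ^ 3) :=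
    calc q * A ^ 2 ≤ n / 2 * A ^ 2 := by gcongr
      _ = 1 / (200 * C ^ 2 * n ^ 3) := by rw [hA]; field_simp; ring
      _ ≤ 1 / (50 * C ^ 2 * n ^ 3) := by gcongr; norm_num
  have hA10 : A / 10 = 1 / (100 * C * n ^ 2) := by rw [hA]; field_simp; ring
  calc ENNReal.ofReal (10 * δ)
      ≤ ENNReal.ofReal ((A / 10) ^ q / 20) :=
        ENNReal.ofReal_le_ofReal (hA10 ▸ ten_mul_le_pow_div_twenty hC hδ hδ₀ hn hqc)
    _ ≤ gaussianVec n {g | leadingSqRatio q g ≤ q * A ^ 2} :=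
        ofReal_le_gaussianVec_leadingSqRatio_le hqn' (by positivity) hA2
    _ ≤ _ := measure_mono fun g (hg : leadingSqRatio q g ≤ q * A ^ 2) => hg.trans hratio
end
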